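/- Let φ(x) = τ xₙ + λ xₙ²/2 on ℝⁿ with τ, λ > 0. Define A g = Δg + |∇φ|² g and B g = -∇φ·∇g - ∇·(g ∇φ). Then the commutator satisfies [A,B] g(x) = -4λ ∂²_{xₙ} g(x) + 4λ(τ + λ xₙ)² g(x) for g ∈ 𝒮(ℝⁿ). -/

import Mathlib

open scoped BigOperators

noncomputable section

/-- The Carleman weight `φ(x) = τ xₙ + λ xₙ²/2`. -/
def phiW (n : ℕ) (τ lam : ℝ) (x : EuclideanSpace ℝ (Fin (n + 1))) : ℝ :=
  τ * x (Fin.last n) + lam * (x (Fin.last n)) ^ 2 / 2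

/-- The Laplacian as the sum of second partial derivatives along coordinates. -/
def lapl (n : ℕ) (u : EuclideanSpace ℝ (Fin (n + 1)) → ℂ)
    (x : EuclideanSpace ℝ (Fin (n + 1))) : ℂ :=
  ∑ i, fderiv ℝ (fun y => fderiv ℝ u y (EuclideanSpace.single i 1)) x
    (EuclideanSpace.single i 1)

/-- The formally self-adjoint part `A u = Δu + |∇φ|² u`. -/
def opA (n : ℕ) (τ lam : ℝ) (u : EuclideanSpace ℝ (Fin (n + 1)) → ℂ)
    (x : EuclideanSpace ℝ (Fin (n + 1))) : ℂ :=
  lapl n u x +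
    ((∑ i, (fderiv ℝ (phiW n τ lam) x (EuclideanSpace.single i 1)) ^ 2 : ℝ) : ℂ) * u x

/-- The formally skew-adjoint part `B u = -∇φ·∇u - ∇·(u ∇φ)`. -/
def opB (n : ℕ) (τ lam : ℝ) (u : EuclideanSpace ℝ (Fin (n + 1)) → ℂ)
    (x : EuclideanSpace ℝ (Fin (n + 1))) : ℂ :=
  -(∑ i, ((fderiv ℝ (phiW n τ lam) x (EuclideanSpace.single i 1) : ℝ) : ℂ) *
      fderiv ℝ u x (EuclideanSpace.single i 1)) -
  ∑ i, fderiv ℝ (fun y =>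
      ((fderiv ℝ (phiW n τ lam) y (EuclideanSpace.single i 1) : ℝ) : ℂ) * u y) x
    (EuclideanSpace.single i 1)

/-!
Since `∇φ = W eₙ` with `W = τ + λ xₙ`, one has `A = Δ + W²` and `B = -2 W ∂ₙ - λ`. As `W` is affine
and `Δ` commutes with `∂ₙ`, `[Δ, W ∂ₙ] = 2λ ∂ₙ²`; and `[W², W ∂ₙ] = -W ∂ₙ(W²) = -2λ W²`.
Hence `[A, B] = -2 [Δ, W ∂ₙ] - 2 [W², W ∂ₙ] = -4λ ∂ₙ² + 4λ W²`.
-/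

open scoped ContDiff

section DirDeriv

variable {E F 𝔸 : Type*} [NormedAddCommGroup E] [NormedSpace ℝ E]
  [NormedAddCommGroup F] [NormedSpace ℝ F] [NormedCommRing 𝔸] [NormedAlgebra ℝ 𝔸]

def dirDeriv (v : E) (f : E → F) : E → F := fun x => fderiv ℝ f x v

theorem ContDiff.dirDeriv {f : E → F} (hf : ContDiff ℝ ∞ f) (v : E) :
    ContDiff ℝ ∞ (dirDeriv v f) :=
  (ContinuousLinearMap.apply ℝ F v).contDiff.comp (hf.fderiv_right (by simp))

theorem dirDeriv_comm {f : E → F} (hf : ContDiff ℝ 2 f) (v w : E) :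
    dirDeriv w (dirDeriv v f) = dirDeriv v (dirDeriv w f) := by
  have hf' : Differentiable ℝ (fderiv ℝ f) :=
    (hf.fderiv_right (m := 1) le_rfl).differentiable one_ne_zero
  have second (v w x : E) : dirDeriv w (dirDeriv v f) x = fderiv ℝ (fderiv ℝ f) x w v := by
    change fderiv ℝ (fun y => fderiv ℝ f y v) x w = _
    rw [fderiv_clm_apply (hf' x) (differentiableAt_const v)]
    simp
  funext x
  rw [second, second, (hf.contDiffAt.isSymmSndFDerivAt (by simp)).eq]

theorem dirDeriv_add {f g : E → F} (hf : Differentiable ℝ f) (hg : Differentiable ℝ g) (v : E) :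
    dirDeriv v (fun x => f x + g x) = fun x => dirDeriv v f x + dirDeriv v g x := by
  funext x
  simp [dirDeriv, fderiv_fun_add (hf x) (hg x)]

theorem dirDeriv_sub {f g : E → F} (hf : Differentiable ℝ f) (hg : Differentiable ℝ g) (v : E) :
    dirDeriv v (fun x => f x - g x) = fun x => dirDeriv v f x - dirDeriv v g x := by
  funext x
  simp [dirDeriv, fderiv_fun_sub (hf x) (hg x)]

theorem dirDeriv_sum {ι : Type*} (s : Finset ι) {f : ι → E → F}
    (hf : ∀ i ∈ s, Differentiable ℝ (f i)) (v : E) :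
    dirDeriv v (fun x => ∑ i ∈ s, f i x) = fun x => ∑ i ∈ s, dirDeriv v (f i) x := by
  funext x
  simp [dirDeriv, fderiv_fun_sum fun i hi => hf i hi x]

theorem dirDeriv_mul {f g : E → 𝔸} (hf : Differentiable ℝ f) (hg : Differentiable ℝ g) (v : E) :
    dirDeriv v (fun x => f x * g x) = fun x => dirDeriv v f x * g x + f x * dirDeriv v g x := by
  funext x
  simp only [dirDeriv, fderiv_fun_mul (hf x) (hg x), add_apply, smul_apply, smul_eq_mul]
  ring

theorem dirDeriv_const_mul {f : E → 𝔸} (hf : Differentiable ℝ f) (c : 𝔸) (v : E) :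
    dirDeriv v (fun x => c * f x) = fun x => c * dirDeriv v f x := by
  funext x
  simp [dirDeriv, fderiv_const_mul (hf x)]

theorem dirDeriv_ofReal_affine (a : ℝ) (ℓ : E →L[ℝ] ℝ) (v : E) :
    dirDeriv v (fun x => ((a + ℓ x : ℝ) : ℂ)) = fun _ => (ℓ v : ℂ) := by
  funext x
  have h : HasFDerivAt (fun x => ((a + ℓ x : ℝ) : ℂ)) (Complex.ofRealCLM.comp ℓ) x :=
    Complex.ofRealCLM.hasFDerivAt.comp x (ℓ.hasFDerivAt.const_add a)
  simp only [dirDeriv, h.fderiv]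
  simp

end DirDeriv

section Carleman

variable {n : ℕ} {τ lam : ℝ}

def phiW' (n : ℕ) (τ lam : ℝ) (x : EuclideanSpace ℝ (Fin (n + 1))) : ℂ :=
  ((τ + lam * x (Fin.last n) : ℝ) : ℂ)

theorem contDiff_phiW' : ContDiff ℝ ∞ (phiW' n τ lam) :=
  Complex.ofRealCLM.contDiff.comp
    (f := fun x : EuclideanSpace ℝ (Fin (n + 1)) => τ + lam * x (Fin.last n)) (by fun_prop)

theorem dirDeriv_phiW' (v : EuclideanSpace ℝ (Fin (n + 1))) :
    dirDeriv v (phiW' n τ lam) = fun _ => ((lam * v (Fin.last n) : ℝ) : ℂ) := by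
  convert dirDeriv_ofReal_affine τ (lam • EuclideanSpace.proj (𝕜 := ℝ) (Fin.last n)) v using 2 <;>
    funext <;> simp [phiW']

theorem hasFDerivAt_phiW (x : EuclideanSpace ℝ (Fin (n + 1))) :
    HasFDerivAt (phiW n τ lam)
      ((τ + lam * x (Fin.last n)) • EuclideanSpace.proj (𝕜 := ℝ) (Fin.last n)) x := by
  have hp : HasDerivAt (fun t : ℝ => τ * t + lam * t ^ 2 / 2) (τ + lam * x (Fin.last n))
      (x (Fin.last n)) :=
    (((hasDerivAt_id (x (Fin.last n))).const_mul τ).add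
      (((hasDerivAt_pow 2 (x (Fin.last n))).const_mul lam).div_const 2)).congr_deriv (by ring)
  exact hp.comp_hasFDerivAt x (EuclideanSpace.proj (𝕜 := ℝ) (Fin.last n)).hasFDerivAt

theorem fderiv_phiW_apply (x v : EuclideanSpace ℝ (Fin (n + 1))) :
    fderiv ℝ (phiW n τ lam) x v = (τ + lam * x (Fin.last n)) * v (Fin.last n) := by
  simp [(hasFDerivAt_phiW x).fderiv]

theorem opA_eq (u : EuclideanSpace ℝ (Fin (n + 1)) → ℂ) :
    opA n τ lam u = fun x => lapl n u x + phiW' n τ lam x ^ 2 * u x := by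
  funext x
  simp [opA, phiW', fderiv_phiW_apply, Finset.sum_ite_eq]

theorem opB_eq {u : EuclideanSpace ℝ (Fin (n + 1)) → ℂ} (hu : Differentiable ℝ u) :
    opB n τ lam u = fun x =>
      -2 * (phiW' n τ lam x * dirDeriv (EuclideanSpace.single (Fin.last n) 1) u x) -
        lam * u x := by
  funext x
  have hW : Differentiable ℝ (phiW' n τ lam) := contDiff_phiW'.differentiable (by simp)
  have hcoef (i : Fin (n + 1)) :
      (fun y => ((fderiv ℝ (phiW n τ lam) y (EuclideanSpace.single i 1) : ℝ) : ℂ) * u y) =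
        fun y => ((EuclideanSpace.single i (1 : ℝ) (Fin.last n) : ℝ) : ℂ) *
          (phiW' n τ lam y * u y) := by
    funext y
    simp only [fderiv_phiW_apply, phiW']
    push_cast; ring
  have hdiv (i : Fin (n + 1)) (c : ℂ) :
      fderiv ℝ (fun y => c * (phiW' n τ lam y * u y)) x (EuclideanSpace.single i 1) =
        c * (lam * EuclideanSpace.single i (1 : ℝ) (Fin.last n) * u x +
          phiW' n τ lam x * fderiv ℝ u x (EuclideanSpace.single i 1)) := by
    change dirDeriv _ (fun y => c * (phiW' n τ lam y * u y)) x = _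
    rw [dirDeriv_const_mul (hW.fun_mul hu), dirDeriv_mul hW hu, dirDeriv_phiW']
    push_cast; rfl
  simp only [opB, hcoef, hdiv]
  simp only [fderiv_phiW_apply, PiLp.single_apply, mul_ite, mul_one, mul_zero,
    apply_ite Complex.ofReal, Complex.ofReal_add, Complex.ofReal_mul, Complex.ofReal_zero, ite_mul,
    zero_mul, Finset.sum_ite_eq, Finset.mem_univ, ↓reduceIte, Complex.ofReal_one, phiW',
    one_mul, dirDeriv]
  ring

end Carleman

section Laplacian

variable {n : ℕ} {τ lam : ℝ}

theorem lapl_eq_sum (u : EuclideanSpace ℝ (Fin (n + 1)) → ℂ) :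
    lapl n u = fun x => ∑ i, dirDeriv (EuclideanSpace.single i 1)
      (dirDeriv (EuclideanSpace.single i 1) u) x :=
  rfl

theorem ContDiff.lapl {u : EuclideanSpace ℝ (Fin (n + 1)) → ℂ} (hu : ContDiff ℝ ∞ u) :
    ContDiff ℝ ∞ (lapl n u) :=
  ContDiff.sum fun _ _ => (hu.dirDeriv _).dirDeriv _

theorem lapl_sub {f g : EuclideanSpace ℝ (Fin (n + 1)) → ℂ} (hf : ContDiff ℝ ∞ f)
    (hg : ContDiff ℝ ∞ g) :
    lapl n (fun x => f x - g x) = fun x => lapl n f x - lapl n g x := by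
  have hdiff {h : EuclideanSpace ℝ (Fin (n + 1)) → ℂ} (hh : ContDiff ℝ ∞ h) :
      Differentiable ℝ h := hh.differentiable (by simp)
  funext x
  simp only [lapl_eq_sum, ← Finset.sum_sub_distrib]
  refine Finset.sum_congr rfl fun i _ => ?_
  rw [dirDeriv_sub (hdiff hf) (hdiff hg),
    dirDeriv_sub (hdiff (hf.dirDeriv _)) (hdiff (hg.dirDeriv _))]

theorem lapl_const_mul {f : EuclideanSpace ℝ (Fin (n + 1)) → ℂ} (hf : ContDiff ℝ ∞ f) (c : ℂ) :
    lapl n (fun x => c * f x) = fun x => c * lapl n f x := by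
  funext x
  simp only [lapl_eq_sum, Finset.mul_sum]
  refine Finset.sum_congr rfl fun i _ => ?_
  rw [dirDeriv_const_mul (hf.differentiable (by simp)),
    dirDeriv_const_mul ((hf.dirDeriv _).differentiable (by simp))]

theorem lapl_dirDeriv_comm {u : EuclideanSpace ℝ (Fin (n + 1)) → ℂ} (hu : ContDiff ℝ ∞ u)
    (v : EuclideanSpace ℝ (Fin (n + 1))) :
    lapl n (dirDeriv v u) = dirDeriv v (lapl n u) := by
  rw [lapl_eq_sum, lapl_eq_sum, dirDeriv_sum _
    fun i _ => ((hu.dirDeriv _).dirDeriv _).differentiable (by simp)]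
  funext x
  refine Finset.sum_congr rfl fun i _ => ?_
  rw [dirDeriv_comm (hu.of_le (WithTop.coe_le_coe.2 le_top)) v,
    dirDeriv_comm ((hu.dirDeriv _).of_le (WithTop.coe_le_coe.2 le_top)) v]

theorem lapl_phiW'_mul {f : EuclideanSpace ℝ (Fin (n + 1)) → ℂ} (hf : ContDiff ℝ ∞ f) :
    lapl n (fun x => phiW' n τ lam x * f x) = fun x =>
      phiW' n τ lam x * lapl n f x +
        2 * lam * dirDeriv (EuclideanSpace.single (Fin.last n) 1) f x := by
  have hW : Differentiable ℝ (phiW' n τ lam) := contDiff_phiW'.differentiable (by simp)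
  have hf' : Differentiable ℝ f := hf.differentiable (by simp)
  have hterm (i : Fin (n + 1)) :
      dirDeriv (EuclideanSpace.single i 1)
        (dirDeriv (EuclideanSpace.single i 1) fun x => phiW' n τ lam x * f x) =
      fun x => 2 * ((lam * EuclideanSpace.single i (1 : ℝ) (Fin.last n) : ℝ) : ℂ) *
          dirDeriv (EuclideanSpace.single i 1) f x +
        phiW' n τ lam x * dirDeriv (EuclideanSpace.single i 1)
          (dirDeriv (EuclideanSpace.single i 1) f) x := by
    have hf'' := (hf.dirDeriv (EuclideanSpace.single i 1)).differentiable (by simp)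
    rw [dirDeriv_mul hW hf', dirDeriv_phiW', dirDeriv_add (hf'.const_mul _) (hW.fun_mul hf''),
      dirDeriv_const_mul hf', dirDeriv_mul hW hf'', dirDeriv_phiW']
    funext x
    ring
  funext x
  simp only [lapl_eq_sum, hterm, Finset.sum_add_distrib, ← Finset.mul_sum]
  simp only [PiLp.single_apply, mul_ite, mul_one, mul_zero, apply_ite Complex.ofReal,
    Complex.ofReal_zero, ite_mul, zero_mul, Finset.sum_ite_eq, Finset.mem_univ, ↓reduceIte]
  ring

end Laplacian

section Commutator

variable {n : ℕ} {τ lam : ℝ} {u : EuclideanSpace ℝ (Fin (n + 1)) → ℂ}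

theorem opA_opB (hu : ContDiff ℝ ∞ u) :
    opA n τ lam (opB n τ lam u) = fun x =>
      -2 * (phiW' n τ lam x * dirDeriv (EuclideanSpace.single (Fin.last n) 1) (lapl n u) x +
          2 * lam * dirDeriv (EuclideanSpace.single (Fin.last n) 1)
            (dirDeriv (EuclideanSpace.single (Fin.last n) 1) u) x) -
        lam * lapl n u x +
        phiW' n τ lam x ^ 2 * (-2 * (phiW' n τ lam x *
          dirDeriv (EuclideanSpace.single (Fin.last n) 1) u x) - lam * u x) := by
  have hWu : ContDiff ℝ ∞ fun x =>
      phiW' n τ lam x * dirDeriv (EuclideanSpace.single (Fin.last n) 1) u x :=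
    contDiff_phiW'.mul (hu.dirDeriv _)
  rw [opB_eq (hu.differentiable (by simp)), opA_eq,
    lapl_sub (contDiff_const.mul hWu) (contDiff_const.mul hu), lapl_const_mul hWu,
    lapl_const_mul hu, lapl_phiW'_mul (hu.dirDeriv _), lapl_dirDeriv_comm hu]

theorem opB_opA (hu : ContDiff ℝ ∞ u) :
    opB n τ lam (opA n τ lam u) = fun x =>
      -2 * (phiW' n τ lam x * (dirDeriv (EuclideanSpace.single (Fin.last n) 1) (lapl n u) x +
          2 * lam * phiW' n τ lam x * u x +
          phiW' n τ lam x ^ 2 * dirDeriv (EuclideanSpace.single (Fin.last n) 1) u x)) -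
        lam * (lapl n u x + phiW' n τ lam x ^ 2 * u x) := by
  have hW : Differentiable ℝ (phiW' n τ lam) := contDiff_phiW'.differentiable (by simp)
  have hu' : Differentiable ℝ u := hu.differentiable (by simp)
  have hlapl : Differentiable ℝ (lapl n u) := hu.lapl.differentiable (by simp)
  have hW2u : Differentiable ℝ fun x => phiW' n τ lam x ^ 2 * u x := (hW.pow 2).mul hu'
  have hsq : (fun x => phiW' n τ lam x ^ 2 * u x) =
      fun x => phiW' n τ lam x * (phiW' n τ lam x * u x) := by
    funext x
    ring
  rw [opA_eq, opB_eq (hlapl.fun_add hW2u), dirDeriv_add hlapl hW2u,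
    hsq, dirDeriv_mul hW (hW.fun_mul hu'), dirDeriv_mul hW hu', dirDeriv_phiW']
  funext x
  simp only [PiLp.single_eq_same, mul_one]
  ring

theorem opA_opB_sub_opB_opA (hu : ContDiff ℝ ∞ u) (x : EuclideanSpace ℝ (Fin (n + 1))) :
    opA n τ lam (opB n τ lam u) x - opB n τ lam (opA n τ lam u) x =
      -(4 * lam : ℝ) * dirDeriv (EuclideanSpace.single (Fin.last n) 1)
          (dirDeriv (EuclideanSpace.single (Fin.last n) 1) u) x +
        (4 * lam : ℝ) * phiW' n τ lam x ^ 2 * u x := by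
  rw [opA_opB hu, opB_opA hu]
  push_cast
  ring

end Commutator

theorem statement5_general (n : ℕ) (τ lam : ℝ)
    (g : SchwartzMap (EuclideanSpace ℝ (Fin (n + 1))) ℂ)
    (x : EuclideanSpace ℝ (Fin (n + 1))) :
    opA n τ lam (opB n τ lam (⇑g)) x - opB n τ lam (opA n τ lam (⇑g)) x =
      -(4 * lam : ℝ) *
          fderiv ℝ (fun y => fderiv ℝ (⇑g) y (EuclideanSpace.single (Fin.last n) 1)) x
            (EuclideanSpace.single (Fin.last n) 1) +
        (4 * lam : ℝ) * ((τ + lam * x (Fin.last n) : ℝ) : ℂ) ^ 2 * g x :=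
  opA_opB_sub_opB_opA (g.smooth ⊤) x

/-- Commutator identity: `[A,B] g = -4λ ∂ₙ² g + 4λ (τ + λ xₙ)² g`. -/
theorem statement5 (n : ℕ) (τ lam : ℝ) (hτ : 0 < τ) (hlam : 0 < lam)
    (g : SchwartzMap (EuclideanSpace ℝ (Fin (n + 1))) ℂ)
    (x : EuclideanSpace ℝ (Fin (n + 1))) :
    opA n τ lam (opB n τ lam (⇑g)) x - opB n τ lam (opA n τ lam (⇑g)) x =
      -(4 * lam : ℝ) *
          fderiv ℝ (fun y => fderiv ℝ (⇑g) y (EuclideanSpace.single (Fin.last n) 1)) x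
            (EuclideanSpace.single (Fin.last n) 1) +
        (4 * lam : ℝ) * ((τ + lam * x (Fin.last n) : ℝ) : ℂ) ^ 2 * g x :=
  statement5_general n τ lam g x

end
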